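/- arXiv:1406.2805 — 2 statements merged into one kernel-verified Lean document; each statement's English description precedes it below -/
import Mathlib

section
/- Let φ : ℝᵐ → ℝⁿ/∼ be continuous, where ℝⁿ/∼ is the metric space of unordered n-tuples of reals. Then there exists a continuous function f : ℝᵐ → ℝⁿ such that for every x ∈ ℝᵐ, the equivalence class of f(x) equals φ(x). -/
/-!
Sorting is a selection: `y ↦ y ∘ Tuple.sort y` is constant on permutation classes, and it is
1-Lipschitz from `permDist` to the sup distance, since the `k`-th smallest entries of two tuples
differ by at most the largest entrywise gap under any matching of their entries. Composing with
`φ` gives the continuous lift.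
-/

noncomputable def permDist (n : ℕ) (y z : Fin n → ℝ) : ℝ :=
  Finset.univ.inf' ⟨1, Finset.mem_univ 1⟩
    (fun σ : Equiv.Perm (Fin n) => ∑ k, |y k - z (σ k)|)

lemma permDist_nonneg (n : ℕ) (y z : Fin n → ℝ) : 0 ≤ permDist n y z :=
  Finset.le_inf' _ _ fun _ _ => Finset.sum_nonneg fun _ _ => abs_nonneg _

lemma exists_permDist_eq_sum (n : ℕ) (y z : Fin n → ℝ) :
    ∃ σ : Equiv.Perm (Fin n), permDist n y z = ∑ k, |y k - z (σ k)| := by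
  obtain ⟨σ, -, hσ⟩ := Finset.exists_mem_eq_inf' (⟨1, Finset.mem_univ 1⟩ : Finset.univ.Nonempty)
    (fun σ : Equiv.Perm (Fin n) => ∑ k, |y k - z (σ k)|)
  exact ⟨σ, hσ⟩

/-- Pigeonhole: the `n - k` indices `i ≥ k` cannot all be sent into the `n - k - 1` values
above `k`. -/
lemma Equiv.Perm.exists_le_apply_le {n : ℕ} (σ : Equiv.Perm (Fin n)) (k : Fin n) :
    ∃ i, k ≤ i ∧ σ i ≤ k := by
  by_contra! h
  have hmaps : ∀ i ∈ Finset.Ici k, σ i ∈ Finset.Ioi k := fun i hi =>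
    Finset.mem_Ioi.2 (h i (Finset.mem_Ici.1 hi))
  have hcard := Finset.card_le_card_of_injOn σ hmaps σ.injective.injOn
  rw [Fin.card_Ici, Fin.card_Ioi] at hcard
  omega

section Monotone

variable {n : ℕ} {u v : Fin n → ℝ} {c : ℝ}

lemma Monotone.sub_le_of_forall_abs_sub_comp_le (hu : Monotone u) (hv : Monotone v)
    (σ : Equiv.Perm (Fin n)) (h : ∀ i, |u i - v (σ i)| ≤ c) (k : Fin n) :
    u k - v k ≤ c := by
  obtain ⟨i, hki, hσi⟩ := σ.exists_le_apply_le k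
  calc u k - v k ≤ u i - v (σ i) := sub_le_sub (hu hki) (hv hσi)
    _ ≤ |u i - v (σ i)| := le_abs_self _
    _ ≤ c := h i

lemma Monotone.abs_sub_le_of_forall_abs_sub_comp_le (hu : Monotone u) (hv : Monotone v)
    (σ : Equiv.Perm (Fin n)) (h : ∀ i, |u i - v (σ i)| ≤ c) (k : Fin n) :
    |u k - v k| ≤ c := by
  refine abs_sub_le_iff.2 ⟨hu.sub_le_of_forall_abs_sub_comp_le hv σ h k,
    hv.sub_le_of_forall_abs_sub_comp_le hu σ⁻¹ (fun i => ?_) k⟩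
  simpa [abs_sub_comm] using h (σ⁻¹ i)

end Monotone

lemma dist_comp_sort_le_permDist (n : ℕ) (y z : Fin n → ℝ) :
    dist (y ∘ Tuple.sort y) (z ∘ Tuple.sort z) ≤ permDist n y z := by
  obtain ⟨σ, hσ⟩ := exists_permDist_eq_sum n y z
  refine (dist_pi_le_iff (permDist_nonneg n y z)).2 fun k => ?_
  rw [Real.dist_eq]
  refine (Tuple.monotone_sort y).abs_sub_le_of_forall_abs_sub_comp_le (Tuple.monotone_sort z)
    ((Tuple.sort y).trans (σ.trans (Tuple.sort z)⁻¹)) (fun i => ?_) k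
  simpa [hσ] using Finset.single_le_sum (f := fun j => |y j - z (σ j)|)
    (fun j _ => abs_nonneg _) (Finset.mem_univ (Tuple.sort y i))

theorem continuous_selection (m n : ℕ) (φ : EuclideanSpace ℝ (Fin m) → (Fin n → ℝ))
    (hφ : ∀ x : EuclideanSpace ℝ (Fin m), ∀ ε > 0, ∃ δ > 0,
      ∀ x' : EuclideanSpace ℝ (Fin m), dist x x' < δ → permDist n (φ x) (φ x') < ε) :
    ∃ f : EuclideanSpace ℝ (Fin m) → (Fin n → ℝ), Continuous f ∧
      ∀ x, ∃ σ : Equiv.Perm (Fin n), f x = φ x ∘ σ := by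
  refine ⟨fun x => φ x ∘ Tuple.sort (φ x), ?_, fun x => ⟨Tuple.sort (φ x), rfl⟩⟩
  refine Metric.continuous_iff.2 fun x ε hε => ?_
  obtain ⟨δ, hδ, hφx⟩ := hφ x ε hε
  refine ⟨δ, hδ, fun x' hx' => ?_⟩
  rw [dist_comm]
  exact (dist_comp_sort_le_permDist n _ _).trans_lt (hφx x' (by rwa [dist_comm]))
end

section
/- For x, y ∈ ℝⁿ with both x and y non-decreasingly sorted, min_{σ∈S_n} ‖x − σ·y‖₁ = ‖x − y‖₁; i.e., the identity permutation achieves the minimum in the quotient metric when both representatives are sorted. -/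
/-!
The cost `|a - b|` satisfies the Monge condition: uncrossing a crossed pair of a matching never
increases its cost. For any Monge cost, a permutation `σ ≠ 1` can be uncrossed at its least moved
point `i`: composing with the transposition of `i` and `σ⁻¹ i` fixes `i`, moves fewer points and
does not increase the cost, so induction on the number of moved points shows that the identity
matching of two sorted vectors is optimal.
-/

open Equiv Finset

def IsMonge {α β M : Type*} [Preorder α] [Preorder β] [Add M] [LE M] (c : α → β → M) : Prop :=
  ∀ ⦃a a' b b'⦄, a ≤ a' → b ≤ b' → c a b + c a' b' ≤ c a b' + c a' b

theorem isMonge_abs_sub : IsMonge fun a b : ℝ ↦ |a - b| := by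
  intro a a' b b' ha hb
  rcases abs_cases (a - b) with ⟨h₁, h₁'⟩ | ⟨h₁, h₁'⟩ <;>
  rcases abs_cases (a' - b') with ⟨h₂, h₂'⟩ | ⟨h₂, h₂'⟩ <;>
  rcases abs_cases (a - b') with ⟨h₃, h₃'⟩ | ⟨h₃, h₃'⟩ <;>
  rcases abs_cases (a' - b) with ⟨h₄, h₄'⟩ | ⟨h₄, h₄'⟩ <;>
  linarith

namespace IsMonge

variable {ι α β M : Type*} [LinearOrder ι] [Fintype ι] [Preorder α] [Preorder β]
  [AddCommMonoid M] [PartialOrder M] [IsOrderedAddMonoid M] {c : α → β → M}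

theorem sum_comp_mul_swap_le (hc : IsMonge c) {x : ι → α} (hx : Monotone x) (y : ι → β)
    (σ : Perm ι) {i j : ι} (hij : i ≤ j) (hσ : y (σ j) ≤ y (σ i)) :
    ∑ k, c (x k) (y ((σ * swap i j) k)) ≤ ∑ k, c (x k) (y (σ k)) := by
  rcases hij.eq_or_lt with rfl | hij
  · simp
  have hsplit (f : ι → M) : ∑ k, f k = ∑ k ∈ {i, j}ᶜ, f k + (f i + f j) := by
    rw [← sum_compl_add_sum {i, j} f, sum_pair hij.ne]
  rw [hsplit, hsplit (fun k ↦ c (x k) (y (σ k)))]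
  refine add_le_add (le_of_eq (sum_congr rfl fun k hk ↦ ?_)) ?_
  · simp only [mem_compl, mem_insert, mem_singleton, not_or] at hk
    rw [Perm.mul_apply, swap_apply_of_ne_of_ne hk.1 hk.2]
  · simpa only [Perm.mul_apply, swap_apply_left, swap_apply_right] using hc (hx hij.le) hσ

theorem sum_le_sum_comp_perm (hc : IsMonge c) {x : ι → α} {y : ι → β} (hx : Monotone x)
    (hy : Monotone y) (σ : Perm ι) :
    ∑ k, c (x k) (y k) ≤ ∑ k, c (x k) (y (σ k)) := by
  induction hn : σ.support.card using Nat.strong_induction_on generalizing σ with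
  | _ n ih =>
  rcases eq_or_ne σ 1 with rfl | hσ1
  · simp
  have hne : σ.support.Nonempty :=
    nonempty_iff_ne_empty.mpr (mt Perm.support_eq_empty_iff.mp hσ1)
  set i := σ.support.min' hne
  have hi : σ i ≠ i := Perm.mem_support.mp (min'_mem _ _)
  have hi_le {k} (hk : σ k ≠ k) : i ≤ k := min'_le _ _ (Perm.mem_support.mpr hk)
  have hj : σ⁻¹ i ≠ i := fun h ↦ hi (Perm.inv_eq_iff_eq.mp h).symm
  have hcard : (σ * swap i (σ⁻¹ i)).support.card < n := by
    rw [← hn, ← Perm.support_inv, mul_inv_rev, swap_inv, ← σ.support_inv]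
    exact Perm.card_support_swap_mul hj
  calc ∑ k, c (x k) (y k) ≤ ∑ k, c (x k) (y ((σ * swap i (σ⁻¹ i)) k)) := ih _ hcard _ rfl
    _ ≤ ∑ k, c (x k) (y (σ k)) := by
      refine hc.sum_comp_mul_swap_le hx y σ (hi_le ?_) ?_
      · simpa using hj.symm
      · simpa using hy (hi_le (σ.injective.ne hi))

end IsMonge

theorem permDist_of_sorted (n : ℕ) (x y : Fin n → ℝ)
    (hx : Monotone x) (hy : Monotone y) :
    permDist n x y = ∑ k, |x k - y k| := by
  refine le_antisymm ?_ (le_inf' _ _ fun σ _ ↦ ?_)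
  · simpa [permDist] using inf'_le (fun σ : Perm (Fin n) ↦ ∑ k, |x k - y (σ k)|) (mem_univ 1)
  · exact isMonge_abs_sub.sum_le_sum_comp_perm hx hy σ
end
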